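/- arXiv:1912.09873 — 3 statements merged into one kernel-verified Lean document; each statement's English description precedes it below -/
import Mathlib

section
/- Let π ∈ S_NC⁻(2p,2q) be such that γ_{2p,2q}π⁻¹ separates the points of O = {1,3,…,2p+2q−1}, and define π̌ on {1,…,p+q} by 2π̌(k) = π²(2k). Then for all k,l ∈ {1,…,p+q}: γ_{p,q}π̌⁻¹(k) = l if and only if γ_{2p,2q}π⁻¹(2k) = 2l. -/
open Equiv Finset
open scoped Classical

noncomputable section

def numCycles {n : ℕ} (π : Equiv.Perm (Fin n)) : ℕ :=
  π.cycleType.card + (univ.filter fun x => π x = x).card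

def plen {n : ℕ} (π : Equiv.Perm (Fin n)) : ℕ := n - numCycles π

def gammaPQ (p q : ℕ) : Equiv.Perm (Fin (p + q)) :=
  finSumFinEquiv.permCongr (Equiv.sumCongr (finRotate p) (finRotate q))

def cycleLen {n : ℕ} (π : Equiv.Perm (Fin n)) (k : Fin n) : ℕ :=
  (univ.filter fun m => π.SameCycle k m).card

def Separates {n : ℕ} (σ : Equiv.Perm (Fin n)) (A : Finset (Fin n)) : Prop :=
  ∀ a ∈ A, ∀ b ∈ A, σ.SameCycle a b → a = b

def oddSet (n : ℕ) : Finset (Fin n) := univ.filter fun i => Odd (i.val + 1)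

def IsSNC (p q : ℕ) (π : Equiv.Perm (Fin (p + q))) : Prop :=
  (∃ i j, π.SameCycle i j ∧ ¬ (gammaPQ p q).SameCycle i j) ∧
    numCycles π + numCycles (gammaPQ p q * π⁻¹) = p + q

def SameParity {n : ℕ} (a b : Fin n) : Prop := (Odd (a.val + 1) ↔ Odd (b.val + 1))

def EvenCycles {n : ℕ} (π : Equiv.Perm (Fin n)) : Prop := ∀ k, Even (cycleLen π k)

def ParityReversing {n : ℕ} (π : Equiv.Perm (Fin n)) : Prop := ∀ k, ¬ SameParity k (π k)

def SNCminus (p q : ℕ) (π : Equiv.Perm (Fin (p + q))) : Prop :=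
  IsSNC p q π ∧ EvenCycles π ∧ ParityReversing π

end

/-! A parity-reversing π and γ = γ_{2p,2q} make γπ⁻¹ parity preserving, so
separation of the odd labels forces γπ⁻¹ to fix them. Hence π⁻¹ = γ⁻¹ on odd labels, i.e.
π(2k) = γ(2k), and so 2π̌(k) = π(γ(2k)), giving γπ⁻¹(2π̌(k)) = γ²(2k) = 2γ_{p,q}(k). -/

lemma val_finRotate {n : ℕ} (i : Fin n) :
    (finRotate n i).val = if i.val + 1 = n then 0 else i.val + 1 := by
  rcases n with _ | n
  · exact i.elim0
  · rw [coe_finRotate]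
    by_cases h : i = Fin.last n
    · subst h; simp
    · rw [if_neg h, if_neg (by have := Fin.val_lt_last h; omega)]

lemma val_gammaPQ (p q : ℕ) (i : Fin (p + q)) :
    (gammaPQ p q i).val =
      if i.val + 1 = p then 0 else if i.val + 1 = p + q then p else i.val + 1 := by
  rcases i with ⟨i, hi⟩
  by_cases h : i < p
  · rw [show (⟨i, hi⟩ : Fin (p + q)) = Fin.castAdd q ⟨i, h⟩ from rfl]
    simp only [gammaPQ, Equiv.permCongr_apply, finSumFinEquiv_symm_apply_castAdd,
      Equiv.sumCongr_apply, Sum.map_inl, finSumFinEquiv_apply_left, Fin.val_castAdd,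
      val_finRotate]
    split_ifs <;> omega
  · rw [show (⟨i, hi⟩ : Fin (p + q)) = Fin.natAdd p ⟨i - p, by omega⟩ by
      ext; simp only [Fin.val_natAdd]; omega]
    simp only [gammaPQ, Equiv.permCongr_apply, finSumFinEquiv_symm_apply_natAdd,
      Equiv.sumCongr_apply, Sum.map_inr, finSumFinEquiv_apply_right, Fin.val_natAdd,
      val_finRotate]
    split_ifs <;> omega

lemma parityReversing_gammaPQ_two_mul (p q : ℕ) :
    ParityReversing (gammaPQ (2 * p) (2 * q)) := by
  intro i
  have hi := i.isLt
  simp only [SameParity, Nat.odd_iff, val_gammaPQ]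
  split_ifs <;> omega

lemma ParityReversing.sameParity_mul_inv {n : ℕ} {σ τ : Perm (Fin n)}
    (hσ : ParityReversing σ) (hτ : ParityReversing τ) (x : Fin n) :
    SameParity x ((σ * τ⁻¹) x) := by
  have h₁ := hτ (τ⁻¹ x)
  have h₂ := hσ (τ⁻¹ x)
  simp only [Perm.coe_inv, apply_symm_apply] at h₁
  simp only [SameParity, Perm.mul_apply] at h₁ h₂ ⊢
  tauto

lemma Separates.apply_eq_self {n : ℕ} {σ : Perm (Fin n)} {A : Finset (Fin n)}
    (hσ : Separates σ A) {a : Fin n} (ha : a ∈ A) (hσa : σ a ∈ A) : σ a = a :=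
  (hσ a ha (σ a) hσa (Perm.sameCycle_apply_right.2 (Perm.SameCycle.refl σ a))).symm

lemma mem_oddSet_iff_of_sameParity {n : ℕ} {a b : Fin n} (h : SameParity a b) :
    a ∈ oddSet n ↔ b ∈ oddSet n := by
  simpa only [oddSet, mem_filter, mem_univ, true_and, SameParity] using h

/-- The point of the doubled annulus with label twice the label of k,
i.e. the element "2k" of {1,…,2p+2q} when k ∈ {1,…,p+q}. -/
noncomputable def dbl {p q : ℕ} (k : Fin (p + q)) : Fin (2*p + 2*q) :=
  ⟨2 * k.val + 1, by have := k.isLt; omega⟩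

lemma dbl_injective {p q : ℕ} : Function.Injective (dbl : Fin (p + q) → Fin (2*p + 2*q)) :=
  fun a b h => Fin.ext (by have := congrArg Fin.val h; simp only [dbl] at this; omega)

lemma dbl_not_mem_oddSet {p q : ℕ} (k : Fin (p + q)) : dbl k ∉ oddSet (2*p + 2*q) := by
  simp [oddSet, dbl, Nat.odd_iff, Nat.add_mod]

lemma gammaPQ_sq_dbl {p q : ℕ} (k : Fin (p + q)) :
    (gammaPQ (2*p) (2*q) ^ 2) (dbl k) = dbl (gammaPQ p q k) := by
  have hk := k.isLt
  ext
  simp only [sq, Perm.mul_apply, val_gammaPQ, dbl]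
  split_ifs <;> omega

lemma apply_dbl_eq_gammaPQ {p q : ℕ} {π : Perm (Fin (2*p + 2*q))} (hπ : ParityReversing π)
    (hsep : Separates (gammaPQ (2*p) (2*q) * π⁻¹) (oddSet (2*p + 2*q))) (k : Fin (p + q)) :
    π (dbl k) = gammaPQ (2*p) (2*q) (dbl k) := by
  set γ := gammaPQ (2*p) (2*q)
  have hγ : ParityReversing γ := parityReversing_gammaPQ_two_mul p q
  have hy : γ (dbl k) ∈ oddSet (2*p + 2*q) := by
    have h₁ := hγ (dbl k)
    have h₂ := dbl_not_mem_oddSet k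
    simp only [SameParity, oddSet, mem_filter, mem_univ, true_and] at h₁ h₂ ⊢
    tauto
  have hfix := hsep.apply_eq_self hy
    ((mem_oddSet_iff_of_sameParity (hγ.sameParity_mul_inv hπ _)).1 hy)
  rw [Perm.mul_apply, γ.apply_eq_iff_eq, Perm.inv_eq_iff_eq] at hfix
  exact hfix.symm

theorem stmt8 {p q : ℕ} (π : Equiv.Perm (Fin (2*p + 2*q)))
    (hπ : SNCminus (2*p) (2*q) π)
    (hsep : Separates (gammaPQ (2*p) (2*q) * π⁻¹) (oddSet (2*p + 2*q)))
    (σ : Equiv.Perm (Fin (p + q)))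
    (hσ : ∀ k : Fin (p + q), (π ^ 2) (dbl k) = dbl (σ k)) :
    ∀ k l : Fin (p + q),
      (gammaPQ p q * σ⁻¹) k = l ↔
        (gammaPQ (2*p) (2*q) * π⁻¹) (dbl k) = dbl l := by
  have hkey : ∀ m, (gammaPQ (2*p) (2*q) * π⁻¹) (dbl (σ m)) = dbl (gammaPQ p q m) := by
    intro m
    have hinv : π⁻¹ (dbl (σ m)) = gammaPQ (2*p) (2*q) (dbl m) := by
      rw [Perm.inv_eq_iff_eq, ← hσ m, sq, Perm.mul_apply, apply_dbl_eq_gammaPQ hπ.2.2 hsep]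
    rw [Perm.mul_apply, hinv, ← Perm.mul_apply, ← sq, gammaPQ_sq_dbl]
  intro k l
  obtain ⟨m, rfl⟩ := σ.surjective k
  rw [hkey, dbl_injective.eq_iff, Perm.mul_apply, Perm.coe_inv, symm_apply_apply]
end

section
/- Let π ∈ S_NC(p,q) have all through cycles (every cycle of π meets both cycles of γ_{p,q}). Then every cycle of γ_{p,q}π⁻¹ is either a singleton or a pair, and every pair is a through cycle of γ_{p,q}π⁻¹. Moreover, if in addition π is parity preserving (p,q even and whenever k, π(k) are in different cycles of γ they share parity, otherwise opposite parity), then γ_{p,q}π⁻¹ separates the points of the odd numbers O. -/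
open Equiv Finset
open scoped Classical

/-!
Write `σ = γ π⁻¹` and `#ρ` for the number of cycles of `ρ`. Multiplying by a transposition
`(x y)` merges the cycles of `x` and `y` or splits their common cycle, so `#` changes by exactly
one. Induction on `σ` then gives the genus inequality `#π + #σ + #(σ π) ≤ n + 2 c`, where `c` is
the number of orbits of `⟨π, σ⟩`.

If two distinct points `x, y` lay in one cycle of `σ` and in one cycle of `γ`, then
`σ₀ = (x y) σ` and `σ₀ π = (x y) γ` would each have one cycle more than `σ` and `γ`, while
`⟨π, σ₀⟩` stays transitive because every cycle of `π` meets both cycles of `γ`. The genus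
inequality would give `#π + #σ ≤ n - #γ < n`, contradicting `π ∈ S_NC(p,q)`. Hence every cycle of
`σ` meets each cycle of `γ` at most once: it is a singleton or a through pair.

Under the parity rule the signed count `∑ₖ (-1)^k ε(k)`, with `ε = ±1` on the two cycles of `γ`,
is negated by `π`, so it vanishes and `p`, `q` are even. Then `γ` changes parity, hence so does `σ`
on a pair `{a, σ a} = {a, γ (π⁻¹ a)}`, and no pair consists of two odd points.
-/

open Equiv.Perm

section MergeRel

variable {α : Type*} {r : α → α → Prop} {x y : α}

def mergeRel (r : α → α → Prop) (x y : α) (a b : α) : Prop :=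
  r a b ∨ (r a x ∧ r y b) ∨ (r a y ∧ r x b)

lemma mergeRel_equivalence (hr : Equivalence r) : Equivalence (mergeRel r x y) where
  refl a := Or.inl (hr.refl a)
  symm := by
    rintro a b (h | ⟨h₁, h₂⟩ | ⟨h₁, h₂⟩)
    · exact Or.inl (hr.symm h)
    · exact Or.inr (Or.inr ⟨hr.symm h₂, hr.symm h₁⟩)
    · exact Or.inr (Or.inl ⟨hr.symm h₂, hr.symm h₁⟩)
  trans := by
    have := @hr.symm; have := @hr.trans
    unfold mergeRel
    grind

lemma mergeRel_le {E : α → α → Prop} (hE : Equivalence E) (hr : ∀ a b, r a b → E a b)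
    (hxy : E x y) {a b : α} : mergeRel r x y a b → E a b := by
  rintro (h | ⟨h₁, h₂⟩ | ⟨h₁, h₂⟩)
  · exact hr a b h
  · exact hE.trans (hr a x h₁) (hE.trans hxy (hr y b h₂))
  · exact hE.trans (hr a y h₁) (hE.trans (hE.symm hxy) (hr x b h₂))

lemma mergeRel_eq_self (hr : Equivalence r) (hxy : r x y) : mergeRel r x y = r :=
  funext₂ fun _ _ => propext ⟨mergeRel_le hr (fun _ _ => id) hxy, Or.inl⟩

end MergeRel

section NumClasses

variable {α : Type*} [Fintype α] {r : α → α → Prop} {x y : α}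

noncomputable def eqClass (r : α → α → Prop) (a : α) : Finset α := univ.filter (r a)

@[simp] lemma mem_eqClass {a b : α} : b ∈ eqClass r a ↔ r a b := by simp [eqClass]

lemma eqClass_eq_iff (hr : Equivalence r) {a b : α} : eqClass r a = eqClass r b ↔ r a b := by
  refine ⟨fun h => ?_, fun h => ?_⟩
  · simpa [← h] using (mem_eqClass (r := r)).2 (hr.refl b)
  · ext c
    simp only [mem_eqClass]
    exact ⟨hr.trans (hr.symm h), hr.trans h⟩

variable [DecidableEq α]

noncomputable def numClasses (r : α → α → Prop) : ℕ := #(univ.image (eqClass r))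

lemma numClasses_le_card (r : α → α → Prop) : numClasses r ≤ Fintype.card α :=
  card_image_le

lemma numClasses_pos [Nonempty α] (r : α → α → Prop) : 0 < numClasses r :=
  card_pos.2 (univ_nonempty.image _)

lemma numClasses_le_one (h : ∀ a b, r a b) : numClasses r ≤ 1 :=
  card_le_one.2 <| by simp [eqClass, h]

lemma eqClass_mergeRel (hr : Equivalence r) (hxy : ¬ r x y) (a : α) :
    eqClass (mergeRel r x y) a =
      if r a x ∨ r a y then eqClass r x ∪ eqClass r y else eqClass r a := by
  ext b
  have := @hr.symm; have := @hr.trans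
  split_ifs <;> simp only [mem_eqClass, mergeRel, mem_union] <;> grind

lemma image_eqClass_mergeRel (hr : Equivalence r) (hxy : ¬ r x y) :
    univ.image (eqClass (mergeRel r x y)) =
      insert (eqClass r x ∪ eqClass r y)
        (((univ.image (eqClass r)).erase (eqClass r x)).erase (eqClass r y)) := by
  ext c
  simp only [eqClass_mergeRel hr hxy, mem_image, mem_univ, true_and, mem_insert, mem_erase]
  constructor
  · rintro ⟨a, rfl⟩
    split_ifs with h
    · exact Or.inl rfl
    · rw [not_or] at h
      exact Or.inr ⟨fun e => h.2 ((eqClass_eq_iff hr).1 e),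
        fun e => h.1 ((eqClass_eq_iff hr).1 e), a, rfl⟩
  · rintro (rfl | ⟨hy, hx, a, rfl⟩)
    · exact ⟨x, if_pos (Or.inl (hr.refl x))⟩
    · exact ⟨a, if_neg fun h => h.elim (fun h => hx ((eqClass_eq_iff hr).2 h))
        (fun h => hy ((eqClass_eq_iff hr).2 h))⟩

lemma numClasses_mergeRel_add_one (hr : Equivalence r) (hxy : ¬ r x y) :
    numClasses (mergeRel r x y) + 1 = numClasses r := by
  have hunion : eqClass r x ∪ eqClass r y ∉ univ.image (eqClass r) := by
    simp only [mem_image, mem_univ, true_and, not_exists]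
    intro a ha
    have hx : x ∈ eqClass r a := ha ▸ mem_union_left _ (mem_eqClass.2 (hr.refl x))
    have hy : y ∈ eqClass r a := ha ▸ mem_union_right _ (mem_eqClass.2 (hr.refl y))
    rw [mem_eqClass] at hx hy
    exact hxy (hr.trans (hr.symm hx) hy)
  have hx : eqClass r x ∈ univ.image (eqClass r) := mem_image_of_mem _ (mem_univ x)
  have hy : eqClass r y ∈ (univ.image (eqClass r)).erase (eqClass r x) :=
    mem_erase.2 ⟨fun e => hxy (hr.symm ((eqClass_eq_iff hr).1 e)), mem_image_of_mem _ (mem_univ y)⟩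
  have htwo := card_pos.2 ⟨_, hy⟩
  rw [card_erase_of_mem hx] at htwo
  unfold numClasses
  rw [image_eqClass_mergeRel hr hxy,
    card_insert_of_notMem (fun h => hunion (mem_of_mem_erase (mem_of_mem_erase h))),
    card_erase_of_mem hy, card_erase_of_mem hx]
  omega

end NumClasses

section SameCycle

variable {α : Type*} {f ρ : Equiv.Perm α} {x y : α}

lemma Equiv.Perm.sameCycle_self_apply (f : Equiv.Perm α) (x : α) : f.SameCycle x (f x) :=
  sameCycle_apply_right.2 (SameCycle.refl f x)

lemma Equiv.Perm.SameCycle.mem_of_mapsTo [Finite α] {s : Set α} (hs : Set.MapsTo f s s)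
    {a b : α} (ha : a ∈ s) (hab : f.SameCycle a b) : b ∈ s := by
  obtain ⟨i, rfl⟩ := hab.exists_nat_pow_eq
  exact hs.perm_pow i ha

lemma Equiv.Perm.SameCycle.rel [Finite α] {E : α → α → Prop} (hE : Equivalence E)
    (hf : ∀ u, E u (f u)) {a b : α} (hab : f.SameCycle a b) : E a b :=
  hab.mem_of_mapsTo (s := {b | E a b}) (fun _ hu => hE.trans hu (hf _)) (hE.refl a)

variable [DecidableEq α]

lemma Equivalence.rel_swap_apply {E : α → α → Prop} (hE : Equivalence E) (hxy : E x y)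
    {u v : α} (huv : E u v) : E u (swap x y v) := by
  rw [swap_apply_def]
  split_ifs with h₁ h₂
  · exact hE.trans (h₁ ▸ huv) hxy
  · exact hE.trans (h₂ ▸ huv) (hE.symm hxy)
  · exact huv

lemma Equiv.Perm.SameCycle.rel_of_swap_mul [Finite α] {E : α → α → Prop} (hE : Equivalence E)
    (hxy : E x y) (hρ : ∀ u, E u (ρ u)) {a b : α} (hab : (swap x y * ρ).SameCycle a b) :
    E a b :=
  hab.rel hE fun u => show E u (swap x y (ρ u)) from hE.rel_swap_apply hxy (hρ u)

lemma sameCycle_swap_mul_of_not_sameCycle [Finite α] (h : ¬ ρ.SameCycle x y) :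
    (swap x y * ρ).SameCycle x y := by
  set τ := swap x y * ρ
  by_contra hτ
  set s := {u | ρ.SameCycle x u ∨ ¬ τ.SameCycle x u}
  have hs : Set.MapsTo τ s s := by
    rintro u (hu | hu)
    · have hρu : ρ.SameCycle x (ρ u) := sameCycle_apply_right.2 hu
      show ρ.SameCycle x (swap x y (ρ u)) ∨ ¬ τ.SameCycle x (swap x y (ρ u))
      rw [swap_apply_def]
      split_ifs with h₁ h₂
      · exact Or.inr hτ
      · exact absurd (h₂ ▸ hρu) h
      · exact Or.inl hρu
    · exact Or.inr (mt sameCycle_apply_right.1 hu)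
  -- the `τ`-predecessor of `x` then lies on the `ρ`-cycle of `x`, but `ρ` sends it to `y`
  have hu₀ : τ.symm x ∈ s :=
    SameCycle.mem_of_mapsTo hs (Or.inl (SameCycle.refl _ _))
      (sameCycle_symm_apply_right.2 (SameCycle.refl _ _))
  have hρ : ρ (τ.symm x) = y := by
    have : ρ = swap x y * τ := by simp [τ, ← mul_assoc]
    rw [this, Perm.mul_apply, apply_symm_apply, swap_apply_left]
  rcases hu₀ with hu₀ | hu₀
  · exact h (hρ ▸ sameCycle_apply_right.2 hu₀)
  · exact hu₀ (sameCycle_symm_apply_right.2 (SameCycle.refl _ _))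

lemma sameCycle_swap_mul_iff_mergeRel [Finite α] (h : ¬ ρ.SameCycle x y) {a b : α} :
    (swap x y * ρ).SameCycle a b ↔ mergeRel ρ.SameCycle x y a b := by
  have hM := mergeRel_equivalence (x := x) (y := y) (SameCycle.equivalence ρ)
  have hτ := sameCycle_swap_mul_of_not_sameCycle h
  refine ⟨SameCycle.rel_of_swap_mul hM (Or.inr (Or.inl ⟨.refl _ _, .refl _ _⟩))
    (fun u => Or.inl (ρ.sameCycle_self_apply u)), mergeRel_le (SameCycle.equivalence _) ?_ hτ⟩
  intro a b hab
  rw [show ρ = swap x y * (swap x y * ρ) by simp [← mul_assoc]] at hab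
  exact hab.rel_of_swap_mul (SameCycle.equivalence _) hτ (sameCycle_self_apply _)

end SameCycle

section NumCycles

variable {n : ℕ} {ρ : Equiv.Perm (Fin n)} {x y : Fin n}

lemma eqClass_sameCycle_of_apply_eq (h : ρ x = x) : eqClass ρ.SameCycle x = {x} := by
  ext b
  simp only [mem_eqClass, mem_singleton]
  exact ⟨fun h' => (h'.eq_of_left h).symm, fun h' => h' ▸ SameCycle.refl _ _⟩

lemma image_eqClass_sameCycle_support (ρ : Equiv.Perm (Fin n)) :
    ρ.support.image (eqClass ρ.SameCycle) = ρ.cycleFactorsFinset.image support := by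
  ext c
  simp only [mem_image]
  constructor
  · rintro ⟨a, ha, rfl⟩
    refine ⟨ρ.cycleOf a, cycleOf_mem_cycleFactorsFinset_iff.2 ha, ?_⟩
    ext b
    simp only [mem_eqClass, mem_support_cycleOf_iff, ha, and_true]
  · rintro ⟨d, hd, rfl⟩
    obtain ⟨a, ha⟩ := (mem_cycleFactorsFinset_iff.1 hd).1.nonempty_support
    refine ⟨a, mem_cycleFactorsFinset_support_le hd ha, ?_⟩
    ext b
    rw [cycle_is_cycleOf ha hd]
    simp only [mem_eqClass, mem_support_cycleOf_iff, mem_cycleFactorsFinset_support_le hd ha,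
      and_true]

lemma numCycles_eq_numClasses (ρ : Equiv.Perm (Fin n)) :
    numCycles ρ = numClasses ρ.SameCycle := by
  set F := univ.filter fun a => ρ a = a
  have hsplit : univ.image (eqClass ρ.SameCycle) =
      F.image (eqClass ρ.SameCycle) ∪ ρ.support.image (eqClass ρ.SameCycle) := by
    rw [← image_union, ← filter_union_filter_not_eq (fun a => ρ a = a) univ]
    congr 2
  have hdisj :
      Disjoint (F.image (eqClass ρ.SameCycle)) (ρ.support.image (eqClass ρ.SameCycle)) := by
    rw [disjoint_iff_ne]
    rintro _ h₁ _ h₂ rfl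
    obtain ⟨a, ha, rfl⟩ := mem_image.1 h₁
    obtain ⟨b, hb, he⟩ := mem_image.1 h₂
    rw [eqClass_sameCycle_of_apply_eq (mem_filter.1 ha).2] at he
    have h₁ : b ∈ eqClass ρ.SameCycle b := mem_eqClass.2 (SameCycle.refl _ _)
    have h₂ : ρ b ∈ eqClass ρ.SameCycle b := mem_eqClass.2 (sameCycle_self_apply _ _)
    rw [he, mem_singleton] at h₁ h₂
    exact mem_support.1 hb (h₂.trans h₁.symm)
  have hF : #(F.image (eqClass ρ.SameCycle)) = #F := by
    rw [image_congr (g := singleton) fun a ha => eqClass_sameCycle_of_apply_eq (mem_filter.1 ha).2]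
    exact card_image_of_injective _ singleton_injective
  have hcyc : #(ρ.cycleFactorsFinset.image support) = #ρ.cycleFactorsFinset := by
    refine card_image_of_injOn fun c hc d hd h => ?_
    obtain ⟨a, ha⟩ := (mem_cycleFactorsFinset_iff.1 hc).1.nonempty_support
    rw [cycle_is_cycleOf ha hc, cycle_is_cycleOf (h ▸ ha : a ∈ d.support) hd]
  unfold numClasses numCycles
  rw [hsplit, card_union_of_disjoint hdisj, hF, image_eqClass_sameCycle_support, hcyc,
    cycleType_def, Multiset.card_map, add_comm]
  rfl

lemma numCycles_le (ρ : Equiv.Perm (Fin n)) : numCycles ρ ≤ n := by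
  simpa [numCycles_eq_numClasses] using numClasses_le_card ρ.SameCycle

lemma numCycles_one : numCycles (1 : Equiv.Perm (Fin n)) = n := by
  simp [numCycles]

lemma numCycles_pos [NeZero n] (ρ : Equiv.Perm (Fin n)) : 0 < numCycles ρ :=
  numCycles_eq_numClasses ρ ▸ numClasses_pos _

lemma sign_eq_neg_one_pow_numCycles (ρ : Equiv.Perm (Fin n)) :
    sign ρ = (-1) ^ (n + numCycles ρ) := by
  have hcard := card_filter_add_card_filter_not (s := univ) (fun a => ρ a = a)
  rw [card_univ, Fintype.card_fin] at hcard
  have hsupp : #ρ.support = #(univ.filter fun a => ¬ ρ a = a) := rfl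
  have : n + numCycles ρ = (ρ.cycleType.sum + Multiset.card ρ.cycleType) +
      2 * #(univ.filter fun a => ρ a = a) := by
    rw [sum_cycleType, numCycles]; omega
  rw [sign_of_cycleType, this, pow_add _ (_ + _) (2 * _), pow_mul, neg_one_sq, one_pow, mul_one]

lemma not_sameCycle_swap_mul_of_sameCycle (hxy : x ≠ y) (h : ρ.SameCycle x y) :
    ¬ (swap x y * ρ).SameCycle x y := by
  intro hτ
  -- otherwise `swap x y * ρ` and `ρ` have the same cycles, yet their signs differ
  have hrel : (swap x y * ρ).SameCycle = ρ.SameCycle := by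
    ext a b
    refine ⟨SameCycle.rel_of_swap_mul (SameCycle.equivalence _) h (sameCycle_self_apply ρ),
      fun hab => ?_⟩
    rw [show ρ = swap x y * (swap x y * ρ) by simp [← mul_assoc]] at hab
    exact hab.rel_of_swap_mul (SameCycle.equivalence _) hτ (sameCycle_self_apply _)
  have hsign := sign_eq_neg_one_pow_numCycles (swap x y * ρ)
  rw [numCycles_eq_numClasses, hrel, ← numCycles_eq_numClasses, ← sign_eq_neg_one_pow_numCycles,
    Perm.sign_mul, sign_swap hxy] at hsign
  exact units_ne_neg_self (sign ρ) (by simpa using hsign.symm)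

lemma sameCycle_iff_mergeRel_swap_mul (hxy : x ≠ y) (h : ρ.SameCycle x y) {a b : Fin n} :
    ρ.SameCycle a b ↔ mergeRel (swap x y * ρ).SameCycle x y a b := by
  have := sameCycle_swap_mul_iff_mergeRel (not_sameCycle_swap_mul_of_sameCycle hxy h)
    (a := a) (b := b)
  rwa [← mul_assoc, swap_mul_self, one_mul] at this

lemma numCycles_swap_mul_add_one (h : ¬ ρ.SameCycle x y) :
    numCycles (swap x y * ρ) + 1 = numCycles ρ := by
  have : (swap x y * ρ).SameCycle = mergeRel ρ.SameCycle x y := by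
    ext a b; exact sameCycle_swap_mul_iff_mergeRel h
  rw [numCycles_eq_numClasses, numCycles_eq_numClasses, this]
  exact numClasses_mergeRel_add_one (SameCycle.equivalence ρ) h

lemma numCycles_swap_mul_of_sameCycle (hxy : x ≠ y) (h : ρ.SameCycle x y) :
    numCycles (swap x y * ρ) = numCycles ρ + 1 := by
  have := numCycles_swap_mul_add_one (not_sameCycle_swap_mul_of_sameCycle hxy h)
  rwa [← mul_assoc, swap_mul_self, one_mul, eq_comm] at this

lemma numCycles_swap_mul_le (hxy : x ≠ y) : numCycles (swap x y * ρ) ≤ numCycles ρ + 1 := by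
  by_cases h : ρ.SameCycle x y
  · exact (numCycles_swap_mul_of_sameCycle hxy h).le
  · have := numCycles_swap_mul_add_one h
    omega

end NumCycles

section JoinRel

variable {α : Type*} {π σ : Equiv.Perm α}

def joinRel (π σ : Equiv.Perm α) : α → α → Prop :=
  Relation.EqvGen fun u v => v = π u ∨ v = σ u

lemma joinRel_equivalence (π σ : Equiv.Perm α) : Equivalence (joinRel π σ) :=
  Relation.EqvGen.is_equivalence _

lemma joinRel_apply_left (u : α) : joinRel π σ u (π u) := .rel _ _ (Or.inl rfl)

lemma joinRel_apply_right (u : α) : joinRel π σ u (σ u) := .rel _ _ (Or.inr rfl)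

lemma joinRel_le {E : α → α → Prop} (hE : Equivalence E) (hπ : ∀ u, E u (π u))
    (hσ : ∀ u, E u (σ u)) {a b : α} (h : joinRel π σ a b) : E a b :=
  hE.eqvGen_iff.1 <|
    Relation.EqvGen.mono (fun u v huv => by rcases huv with rfl | rfl <;> simp [*]) _ _ h

lemma mergeRel_joinRel_swap_mul_le [DecidableEq α] {x y a b : α}
    (h : mergeRel (joinRel π σ) x y a b) : mergeRel (joinRel π (swap x y * σ)) x y a b := by
  have hM := mergeRel_equivalence (x := x) (y := y) (joinRel_equivalence π (swap x y * σ))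
  have hxy : mergeRel (joinRel π (swap x y * σ)) x y x y :=
    Or.inr (Or.inl ⟨(joinRel_equivalence _ _).refl x, (joinRel_equivalence _ _).refl y⟩)
  refine mergeRel_le hM (fun a b => joinRel_le hM (fun u => Or.inl (joinRel_apply_left u))
    (fun u => ?_)) hxy h
  rw [show σ u = swap x y ((swap x y * σ) u) by simp]
  exact hM.rel_swap_apply hxy (Or.inl (joinRel_apply_right u))

lemma joinRel_eq_mergeRel_swap_mul [DecidableEq α] {x : α} :
    joinRel π σ = mergeRel (joinRel π (swap x (σ x) * σ)) x (σ x) := by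
  ext a b
  rw [← mergeRel_eq_self (joinRel_equivalence π σ) (joinRel_apply_right x)]
  refine ⟨mergeRel_joinRel_swap_mul_le, fun h => ?_⟩
  simpa [← mul_assoc] using mergeRel_joinRel_swap_mul_le (σ := swap x (σ x) * σ) h

variable [Finite α]

lemma joinRel_of_sameCycle_left {a b : α} (h : π.SameCycle a b) : joinRel π σ a b :=
  h.rel (joinRel_equivalence π σ) joinRel_apply_left

lemma joinRel_of_sameCycle_mul {a b : α} (h : (σ * π).SameCycle a b) : joinRel π σ a b :=
  h.rel (joinRel_equivalence π σ) fun u =>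
    (joinRel_equivalence π σ).trans (joinRel_apply_left u) (joinRel_apply_right (π u))

lemma joinRel_one : joinRel π 1 = π.SameCycle := by
  ext a b
  exact ⟨joinRel_le (SameCycle.equivalence π) (sameCycle_self_apply π)
    (fun u => SameCycle.refl π u), joinRel_of_sameCycle_left⟩

end JoinRel

section Genus

variable {n : ℕ}

theorem numCycles_add_numCycles_add_numCycles_mul_le (π σ : Equiv.Perm (Fin n)) :
    numCycles π + numCycles σ + numCycles (σ * π) ≤ n + 2 * numClasses (joinRel π σ) := by
  by_cases hσ : σ = 1
  · subst hσ
    rw [numCycles_one, one_mul, joinRel_one, ← numCycles_eq_numClasses]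
    omega
  obtain ⟨x, hx⟩ : ∃ x, σ x ≠ x := by
    by_contra! h
    exact hσ (Equiv.ext h)
  set σ' := swap x (σ x) * σ
  have hσ' : numCycles σ' = numCycles σ + 1 :=
    numCycles_swap_mul_of_sameCycle hx.symm (sameCycle_self_apply σ x)
  have hmul : σ * π = swap x (σ x) * (σ' * π) := by simp [σ', ← mul_assoc]
  have hJ : joinRel π σ = mergeRel (joinRel π σ') x (σ x) := joinRel_eq_mergeRel_swap_mul
  have ih := numCycles_add_numCycles_add_numCycles_mul_le π σ'
  rw [hmul, hJ]
  by_cases hc : joinRel π σ' x (σ x)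
  · rw [mergeRel_eq_self (joinRel_equivalence π σ') hc]
    have := numCycles_swap_mul_le (ρ := σ' * π) hx.symm
    omega
  · have := numClasses_mergeRel_add_one (joinRel_equivalence π σ') hc
    have := numCycles_swap_mul_add_one (mt joinRel_of_sameCycle_mul hc)
    omega
termination_by n - numCycles σ
decreasing_by
  have := numCycles_le (swap x (σ x) * σ)
  have := numCycles_swap_mul_of_sameCycle hx.symm (sameCycle_self_apply σ x)
  omega

theorem numCycles_add_numCycles_add_numCycles_mul_le_of_forall_joinRel {π σ : Equiv.Perm (Fin n)}
    (h : ∀ a b, joinRel π σ a b) : numCycles π + numCycles σ + numCycles (σ * π) ≤ n + 2 := by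
  have := numCycles_add_numCycles_add_numCycles_mul_le π σ
  have := numClasses_le_one h
  omega

end Genus

section ThroughCycles

variable {n : ℕ} {γ π : Equiv.Perm (Fin n)}

lemma joinRel_swap_mul_mul_inv_of_sameCycle
    (hγ : ∀ a b c, γ.SameCycle a b ∨ γ.SameCycle a c ∨ γ.SameCycle b c)
    (hπ : ∀ a, ∃ b, π.SameCycle a b ∧ ¬ γ.SameCycle a b) {x y : Fin n} (hxy : x ≠ y)
    (hγxy : γ.SameCycle x y) (a b : Fin n) : joinRel π (swap x y * γ * π⁻¹) a b := by
  set J := joinRel π (swap x y * γ * π⁻¹)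
  have hJ := joinRel_equivalence π (swap x y * γ * π⁻¹)
  have hmerge := fun {a b} => sameCycle_iff_mergeRel_swap_mul (a := a) (b := b) hxy hγxy
  have hgJ : ∀ a b, (swap x y * γ).SameCycle a b → J a b := fun a b h =>
    joinRel_of_sameCycle_mul (by rwa [inv_mul_cancel_right])
  have hgγ : ∀ {a b}, (swap x y * γ).SameCycle a b → γ.SameCycle a b := fun h =>
    hmerge.2 (Or.inl h)
  obtain ⟨x', hπx, hγx⟩ := hπ x
  obtain ⟨y', hπy, hγy⟩ := hπ y
  have hγx'y' : γ.SameCycle x' y' := by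
    rcases hγ x x' y' with h | h | h
    · exact absurd h hγx
    · exact absurd (hγxy.symm.trans h) hγy
    · exact h
  have hgx'y' : (swap x y * γ).SameCycle x' y' := by
    rcases hmerge.1 hγx'y' with h | ⟨h, -⟩ | ⟨h, -⟩
    · exact h
    · exact absurd (hgγ h).symm hγx
    · exact absurd ((hgγ h).trans hγxy.symm).symm hγx
  have hJxy : J x y := hJ.trans (joinRel_of_sameCycle_left hπx)
    (hJ.trans (hgJ _ _ hgx'y') (hJ.symm (joinRel_of_sameCycle_left hπy)))
  have hγJ : ∀ {a b}, γ.SameCycle a b → J a b := fun h => mergeRel_le hJ hgJ hJxy (hmerge.1 h)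
  have hJx : ∀ a, J a x := fun a => by
    rcases hγ a x x' with h | h | h
    · exact hγJ h
    · exact hJ.trans (hγJ h) (hJ.symm (joinRel_of_sameCycle_left hπx))
    · exact absurd h hγx
  exact hJ.trans (hJx a) (hJ.symm (hJx b))

theorem eq_of_sameCycle_mul_inv_of_sameCycle
    (hγ : ∀ a b c, γ.SameCycle a b ∨ γ.SameCycle a c ∨ γ.SameCycle b c)
    (hπ : ∀ a, ∃ b, π.SameCycle a b ∧ ¬ γ.SameCycle a b)
    (hsum : numCycles π + numCycles (γ * π⁻¹) = n) {x y : Fin n}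
    (hσ : (γ * π⁻¹).SameCycle x y) (hγxy : γ.SameCycle x y) : x = y := by
  by_contra hxy
  have : NeZero n := ⟨fun h => (h ▸ x).elim0⟩
  have hσ' := numCycles_swap_mul_of_sameCycle hxy hσ
  have hg := numCycles_swap_mul_of_sameCycle hxy hγxy
  have hγpos := numCycles_pos γ
  have := numCycles_add_numCycles_add_numCycles_mul_le_of_forall_joinRel
    (joinRel_swap_mul_mul_inv_of_sameCycle hγ hπ hxy hγxy)
  rw [inv_mul_cancel_right, mul_assoc, hσ', hg] at this
  omega

lemma eq_or_eq_or_eq_of_sameCycle_mul_inv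
    (hγ : ∀ a b c, γ.SameCycle a b ∨ γ.SameCycle a c ∨ γ.SameCycle b c)
    (hπ : ∀ a, ∃ b, π.SameCycle a b ∧ ¬ γ.SameCycle a b)
    (hsum : numCycles π + numCycles (γ * π⁻¹) = n) {a b c : Fin n}
    (hab : (γ * π⁻¹).SameCycle a b) (hac : (γ * π⁻¹).SameCycle a c) :
    a = b ∨ a = c ∨ b = c := by
  have key := fun {x y} => eq_of_sameCycle_mul_inv_of_sameCycle (x := x) (y := y) hγ hπ hsum
  rcases hγ a b c with h | h | h
  · exact Or.inl (key hab h)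
  · exact Or.inr (Or.inl (key hac h))
  · exact Or.inr (Or.inr (key (hab.symm.trans hac) h))

lemma cycleLen_mul_inv_le_two
    (hγ : ∀ a b c, γ.SameCycle a b ∨ γ.SameCycle a c ∨ γ.SameCycle b c)
    (hπ : ∀ a, ∃ b, π.SameCycle a b ∧ ¬ γ.SameCycle a b)
    (hsum : numCycles π + numCycles (γ * π⁻¹) = n) (k : Fin n) :
    cycleLen (γ * π⁻¹) k ≤ 2 := by
  by_contra! h
  obtain ⟨a, ha, b, hb, c, hc, hab, hac, hbc⟩ := two_lt_card.1 h
  simp only [mem_filter, mem_univ, true_and] at ha hb hc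
  rcases eq_or_eq_or_eq_of_sameCycle_mul_inv hγ hπ hsum (ha.symm.trans hb) (ha.symm.trans hc)
    with h | h | h <;> contradiction

lemma exists_sameCycle_mul_inv_not_sameCycle
    (hγ : ∀ a b c, γ.SameCycle a b ∨ γ.SameCycle a c ∨ γ.SameCycle b c)
    (hπ : ∀ a, ∃ b, π.SameCycle a b ∧ ¬ γ.SameCycle a b)
    (hsum : numCycles π + numCycles (γ * π⁻¹) = n) {k : Fin n}
    (hk : cycleLen (γ * π⁻¹) k = 2) : ∃ m, (γ * π⁻¹).SameCycle k m ∧ ¬ γ.SameCycle k m := by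
  obtain ⟨m, hm, hmk⟩ := exists_mem_ne (hk ▸ one_lt_two) k
  rw [mem_filter] at hm
  exact ⟨m, hm.2, fun h => hmk (eq_of_sameCycle_mul_inv_of_sameCycle hγ hπ hsum hm.2 h).symm⟩

end ThroughCycles

section Gamma

variable {α β : Type*}

lemma Equiv.Perm.sameCycle_permCongr (e : α ≃ β) (f : Perm α) {a b : β} :
    (e.permCongr f).SameCycle a b ↔ f.SameCycle (e.symm a) (e.symm b) := by
  have h (i : ℤ) : (e.permCongr f) ^ i = e.permCongr (f ^ i) := (map_zpow e.permCongrHom f i).symm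
  simp only [SameCycle, h, permCongr_apply, ← e.eq_symm_apply]

lemma Equiv.Perm.sumCongr_zpow (f : Perm α) (g : Perm β) (i : ℤ) :
    (f.sumCongr g) ^ i = (f ^ i).sumCongr (g ^ i) := by
  simpa using (map_zpow (sumCongrHom α β) (f, g) i).symm

lemma Equiv.Perm.sameCycle_sumCongr_inl (f : Perm α) (g : Perm β) {a b : α} :
    (f.sumCongr g).SameCycle (.inl a) (.inl b) ↔ f.SameCycle a b := by
  simp [SameCycle, sumCongr_zpow]

lemma Equiv.Perm.sameCycle_sumCongr_inr (f : Perm α) (g : Perm β) {a b : β} :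
    (f.sumCongr g).SameCycle (.inr a) (.inr b) ↔ g.SameCycle a b := by
  simp [SameCycle, sumCongr_zpow]

lemma Equiv.Perm.not_sameCycle_sumCongr_inl_inr (f : Perm α) (g : Perm β) {a : α} {b : β} :
    ¬ (f.sumCongr g).SameCycle (.inl a) (.inr b) := by
  simp [SameCycle, sumCongr_zpow]

lemma Equiv.Perm.not_sameCycle_sumCongr_inr_inl (f : Perm α) (g : Perm β) {a : α} {b : β} :
    ¬ (f.sumCongr g).SameCycle (.inr b) (.inl a) := by
  simp [SameCycle, sumCongr_zpow]

lemma Equiv.Perm.sameCycle_finRotate {m : ℕ} (a b : Fin m) : (finRotate m).SameCycle a b := by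
  rcases lt_or_ge m 2 with hm | hm
  · obtain rfl : a = b := by
      ext; omega
    exact .refl _ _
  · have hsupp := support_finRotate_of_le hm
    exact (isCycle_finRotate_of_le hm).sameCycle (mem_support.1 (hsupp ▸ mem_univ a))
      (mem_support.1 (hsupp ▸ mem_univ b))

lemma not_even_iff_even_finRotate {m : ℕ} (hm : Even m) (i : Fin m) :
    ¬ (Even (i : ℕ) ↔ Even (finRotate m i : ℕ)) := by
  obtain _ | m := m
  · exact i.elim0
  rw [coe_finRotate]
  split_ifs with h
  · simp [h, Nat.even_add_one.1 hm]
  · rw [Nat.even_add_one]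
    tauto

variable {p q : ℕ}

lemma gammaPQ_sameCycle_iff (a b : Fin (p + q)) :
    (gammaPQ p q).SameCycle a b ↔ ((a : ℕ) < p ↔ (b : ℕ) < p) := by
  obtain ⟨a, rfl⟩ := finSumFinEquiv.surjective a
  obtain ⟨b, rfl⟩ := finSumFinEquiv.surjective b
  rw [gammaPQ, sameCycle_permCongr, symm_apply_apply, symm_apply_apply]
  rcases a with a | a <;> rcases b with b | b <;>
    simp [sameCycle_sumCongr_inl, sameCycle_sumCongr_inr, not_sameCycle_sumCongr_inl_inr,
      not_sameCycle_sumCongr_inr_inl, sameCycle_finRotate]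

lemma gammaPQ_sameCycle_trichotomy (a b c : Fin (p + q)) :
    (gammaPQ p q).SameCycle a b ∨ (gammaPQ p q).SameCycle a c ∨ (gammaPQ p q).SameCycle b c := by
  simp only [gammaPQ_sameCycle_iff]
  tauto

lemma not_sameParity_gammaPQ (hp : Even p) (hq : Even q) (k : Fin (p + q)) :
    ¬ SameParity k (gammaPQ p q k) := by
  obtain ⟨k, rfl⟩ := finSumFinEquiv.surjective k
  simp only [SameParity, gammaPQ, permCongr_apply, symm_apply_apply, Nat.odd_add_one,
    Nat.not_odd_iff_even]
  rcases k with i | j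
  · simpa only [Equiv.sumCongr_apply, Sum.map_inl, finSumFinEquiv_apply_left, Fin.val_castAdd]
      using not_even_iff_even_finRotate hp i
  · simpa only [Equiv.sumCongr_apply, Sum.map_inr, finSumFinEquiv_apply_right, Fin.val_natAdd,
      Nat.even_add, hp, true_iff] using not_even_iff_even_finRotate hq j

lemma even_and_even_of_parity {π : Perm (Fin (p + q))}
    (hpar : ∀ k, (¬ (gammaPQ p q).SameCycle k (π k) → SameParity k (π k)) ∧
      ((gammaPQ p q).SameCycle k (π k) → ¬ SameParity k (π k))) :
    Even p ∧ Even q := by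
  set f : Fin (p + q) → ℤ := fun k => (-1) ^ (k : ℕ) * if (k : ℕ) < p then 1 else -1
  have hflip : ∀ k, f (π k) = - f k := by
    intro k
    have h := hpar k
    simp only [gammaPQ_sameCycle_iff, SameParity, Nat.odd_add_one, Nat.not_odd_iff_even] at h
    rcases Nat.even_or_odd (k : ℕ) with h₁ | h₁ <;> rcases Nat.even_or_odd (π k : ℕ) with h₂ | h₂ <;>
      simp only [f, h₁.neg_one_pow, h₂.neg_one_pow] <;> split_ifs <;>
      simp_all [← Nat.not_even_iff_odd]
  have hzero : ∑ k, f k = 0 := by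
    have h := Equiv.sum_comp π f
    simp only [hflip, sum_neg_distrib] at h
    linarith
  rw [Fin.sum_univ_add] at hzero
  simp [f, pow_add, ← Finset.mul_sum, Fin.sum_neg_one_pow] at hzero
  rcases Nat.even_or_odd p with hp | hp <;> rcases Nat.even_or_odd q with hq | hq <;>
    simp_all [← Nat.not_even_iff_odd]

end Gamma

lemma separates_oddSet {p q : ℕ} {π : Equiv.Perm (Fin (p + q))}
    (hπ : ∀ a, ∃ b, π.SameCycle a b ∧ ¬ (gammaPQ p q).SameCycle a b)
    (hsum : numCycles π + numCycles (gammaPQ p q * π⁻¹) = p + q)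
    (hpar : ∀ k, (¬ (gammaPQ p q).SameCycle k (π k) → SameParity k (π k)) ∧
      ((gammaPQ p q).SameCycle k (π k) → ¬ SameParity k (π k))) :
    Separates (gammaPQ p q * π⁻¹) (oddSet (p + q)) := by
  obtain ⟨hp, hq⟩ := even_and_even_of_parity hpar
  set σ := gammaPQ p q * π⁻¹
  have key := fun {x y} =>
    eq_of_sameCycle_mul_inv_of_sameCycle (x := x) (y := y) gammaPQ_sameCycle_trichotomy hπ hsum
  have hflip : ∀ a, σ a ≠ a → ¬ SameParity a (σ a) := by
    intro a ha
    have hσa : σ a = gammaPQ p q (π⁻¹ a) := rfl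
    by_cases hk : (gammaPQ p q).SameCycle (π⁻¹ a) a
    · exact absurd (key (sameCycle_self_apply σ a)
        (hk.symm.trans (hσa ▸ sameCycle_self_apply _ _))).symm ha
    · have h₁ : SameParity (π⁻¹ a) a := by simpa using (hpar (π⁻¹ a)).1 (by simpa using hk)
      have h₂ := not_sameParity_gammaPQ hp hq (π⁻¹ a)
      rw [← hσa] at h₂
      unfold SameParity at h₁ h₂ ⊢
      tauto
  intro a ha b hb hab
  by_contra hne
  have hσa : σ a ≠ a := fun h => hne (hab.eq_of_left h)
  simp only [oddSet, mem_filter, mem_univ, true_and] at ha hb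
  have hb' : b ≠ σ a := by
    rintro rfl
    exact hflip a hσa (iff_of_true ha hb)
  rcases eq_or_eq_or_eq_of_sameCycle_mul_inv gammaPQ_sameCycle_trichotomy hπ hsum hab
    (sameCycle_self_apply σ a) with h | h | h
  · exact hne h
  · exact hσa h.symm
  · exact hb' h

theorem stmt11 {p q : ℕ} (π : Equiv.Perm (Fin (p + q))) (hπ : IsSNC p q π)
    (hall : ∀ k, ∃ m, π.SameCycle k m ∧ ¬ (gammaPQ p q).SameCycle k m) :
    (∀ k, cycleLen (gammaPQ p q * π⁻¹) k ≤ 2) ∧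
    (∀ k, cycleLen (gammaPQ p q * π⁻¹) k = 2 →
        ∃ m, (gammaPQ p q * π⁻¹).SameCycle k m ∧ ¬ (gammaPQ p q).SameCycle k m) ∧
    ((∀ k, (¬ (gammaPQ p q).SameCycle k (π k) → SameParity k (π k)) ∧
            ((gammaPQ p q).SameCycle k (π k) → ¬ SameParity k (π k))) →
      Separates (gammaPQ p q * π⁻¹) (oddSet (p + q))) :=
  ⟨cycleLen_mul_inv_le_two gammaPQ_sameCycle_trichotomy hall hπ.2,
    fun _ => exists_sameCycle_mul_inv_not_sameCycle gammaPQ_sameCycle_trichotomy hall hπ.2,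
    separates_oddSet hall hπ.2⟩
end

section
/- Let π ∈ NC(2n) be an even non-crossing partition (viewed as a permutation by writing each block in increasing order) such that γ_{2n}π⁻¹ fixes every odd number, where γ_{2n} = (1,2,…,2n). Then there exists σ ∈ NC(n) with π = σ̂, the double of σ, given by 2σ(k) = π²(2k). Conversely, for any σ ∈ NC(n), the double σ̂ is even and γ_{2n}σ̂⁻¹ fixes every odd number. -/
/-!
`γ_{2n} π⁻¹` fixes every odd label exactly when `π` agrees with `γ_{2n}` on the even labels.
Such a `π` reverses parity, so all its cycles have even length, and `π²` preserves the even
labels, where it acts as some `σ ∈ S_n`; this makes `π = σ̂`.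

For a double `σ̂`, the cycles of `σ̂` are those of `σ` with `2k + 1` inserted after each `2k`, so
`#(σ̂) = #(σ)`. Moreover `σ̂⁻¹ γ_{2n}` fixes every even label and acts on the odd labels
`2k + 1` as `σ⁻¹ γ_n` acts on `k`, so `#(σ̂⁻¹ γ_{2n}) = n + #(σ⁻¹ γ_n)`. Hence Biane's equality
`|γ_{2n}| = |σ̂| + |σ̂⁻¹ γ_{2n}|` is equivalent to `|γ_n| = |σ| + |σ⁻¹ γ_n|`: `σ̂` is non-crossing
iff `σ` is.
-/

open Equiv Finset
open scoped Classical

/-- Biane's characterization: π is a non-crossing permutation. -/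
def IsNC {n : ℕ} (π : Equiv.Perm (Fin n)) : Prop :=
  plen (finRotate n) = plen π + plen (π⁻¹ * finRotate n)

/-- The element "2k" of {1,…,2n} corresponding to k ∈ {1,…,n} (labels are val+1). -/
noncomputable def dbl2 {n : ℕ} (k : Fin n) : Fin (2*n) :=
  ⟨2 * k.val + 1, by have := k.isLt; omega⟩

/-- π is the double σ̂ of σ: π(2k) = γ_{2n}(2k) on even labels and π²(2k) = 2σ(k). -/
def IsDouble {n : ℕ} (σ : Equiv.Perm (Fin n)) (π : Equiv.Perm (Fin (2*n))) : Prop :=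
  (∀ j : Fin (2*n), Even (j.val + 1) → π j = finRotate (2*n) j) ∧
  (∀ k : Fin n, (π ^ 2) (dbl2 k) = dbl2 (σ k))

open Equiv.Perm

lemma card_image_univ_eq_of_eq_iff {α γ δ : Type*} [Fintype α] [DecidableEq γ] [DecidableEq δ]
    {f : α → γ} {g : α → δ} (h : ∀ a b, f a = f b ↔ g a = g b) :
    #(univ.image f) = #(univ.image g) := by
  have hfst : univ.image f = (univ.image fun a => (f a, g a)).image Prod.fst := by
    rw [image_image]; rfl
  have hsnd : univ.image g = (univ.image fun a => (f a, g a)).image Prod.snd := by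
    rw [image_image]; rfl
  rw [hfst, hsnd, card_image_of_injOn, card_image_of_injOn (f := Prod.snd)] <;>
    intro _ hp _ hq hab <;> obtain ⟨a, -, rfl⟩ := mem_image.1 hp <;>
    obtain ⟨b, -, rfl⟩ := mem_image.1 hq
  · exact Prod.ext ((h a b).2 hab) hab
  · exact Prod.ext hab ((h a b).1 hab)

section Orbits

variable {α β : Type*} [Fintype α] [DecidableEq α] [Fintype β] [DecidableEq β]

noncomputable def orbitFinset (π : Perm α) (x : α) : Finset α := univ.filter (π.SameCycle x)

noncomputable def orbitFinsets (π : Perm α) : Finset (Finset α) := univ.image (orbitFinset π)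

variable {π : Perm α} {x y : α}

lemma mem_orbitFinset : y ∈ orbitFinset π x ↔ π.SameCycle x y := by
  simp [orbitFinset]

lemma orbitFinset_eq_iff : orbitFinset π x = orbitFinset π y ↔ π.SameCycle x y := by
  refine ⟨fun h => mem_orbitFinset.1 (h ▸ mem_orbitFinset.2 (.refl _ _)), fun h => ?_⟩
  ext z
  simp only [mem_orbitFinset]
  exact ⟨h.symm.trans, h.trans⟩

lemma orbitFinset_of_isFixedPt (hx : π x = x) : orbitFinset π x = {x} := by
  ext y
  simp only [mem_orbitFinset, mem_singleton]
  exact ⟨fun h => (h.eq_of_left hx).symm, fun h => h ▸ .refl _ _⟩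

lemma orbitFinset_of_mem_support (hx : x ∈ π.support) :
    orbitFinset π x = (π.cycleOf x).support := by
  ext y
  rw [mem_orbitFinset, mem_support_cycleOf_iff, and_iff_left hx]

lemma orbitFinsets_eq :
    orbitFinsets π =
      π.cycleFactorsFinset.image support ∪ (univ.filter fun x => π x = x).image singleton := by
  ext A
  simp only [orbitFinsets, mem_union, mem_image, mem_univ, true_and, mem_filter]
  constructor
  · rintro ⟨x, rfl⟩
    by_cases hx : π x = x
    · exact .inr ⟨x, hx, (orbitFinset_of_isFixedPt hx).symm⟩
    · exact .inl ⟨π.cycleOf x, cycleOf_mem_cycleFactorsFinset_iff.2 (mem_support.2 hx),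
        (orbitFinset_of_mem_support (mem_support.2 hx)).symm⟩
  · rintro (⟨c, hc, rfl⟩ | ⟨x, hx, rfl⟩)
    · obtain ⟨x, hx⟩ := (mem_cycleFactorsFinset_iff.1 hc).1.nonempty_support
      refine ⟨x, ?_⟩
      rw [orbitFinset_of_mem_support (mem_cycleFactorsFinset_support_le hc hx),
        ← cycle_is_cycleOf hx hc]
    · exact ⟨x, orbitFinset_of_isFixedPt hx⟩

lemma card_orbitFinsets :
    #(orbitFinsets π) = #π.cycleFactorsFinset + #(univ.filter fun x => π x = x) := by
  have hinj : Set.InjOn support (π.cycleFactorsFinset : Set (Perm α)) := by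
    intro c hc d hd hcd
    obtain ⟨x, hx⟩ := (mem_cycleFactorsFinset_iff.1 hc).1.nonempty_support
    have hx' : x ∈ d.support := hcd ▸ hx
    rw [cycle_is_cycleOf hx hc, cycle_is_cycleOf hx' hd]
  have hdisj : Disjoint (π.cycleFactorsFinset.image support)
      ((univ.filter fun x => π x = x).image singleton) := by
    simp only [disjoint_left, mem_image]
    rintro _ ⟨c, hc, rfl⟩ ⟨x, -, hcx⟩
    have := (mem_cycleFactorsFinset_iff.1 hc).1.two_le_card_support
    rw [← hcx, card_singleton] at this
    omega
  rw [orbitFinsets_eq, card_union_of_disjoint hdisj, card_image_of_injOn hinj,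
    card_image_of_injective _ singleton_injective]

lemma card_orbitFinsets_eq_of_sameCycle_iff (ρ : Perm β) (e : β → α)
    (hcover : ∀ x, ∃ b, π.SameCycle x (e b))
    (he : ∀ a b, π.SameCycle (e a) (e b) ↔ ρ.SameCycle a b) :
    #(orbitFinsets π) = #(orbitFinsets ρ) := by
  have : orbitFinsets π = univ.image (orbitFinset π ∘ e) := by
    ext A
    simp only [orbitFinsets, mem_image, mem_univ, true_and, Function.comp_apply]
    refine ⟨?_, fun ⟨b, hb⟩ => ⟨e b, hb⟩⟩
    rintro ⟨x, rfl⟩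
    obtain ⟨b, hb⟩ := hcover x
    exact ⟨b, orbitFinset_eq_iff.2 hb.symm⟩
  rw [this, orbitFinsets]
  exact card_image_univ_eq_of_eq_iff fun a b => by
    simp only [Function.comp_apply, orbitFinset_eq_iff, he]

lemma even_card_orbitFinset {P : α → Prop} (hP : ∀ x, P (π x) ↔ ¬ P x) (x : α) :
    Even #(orbitFinset π x) := by
  set O := orbitFinset π x
  have hO (y : α) : π y ∈ O ↔ y ∈ O := by
    simp only [O, mem_orbitFinset, sameCycle_apply_right]
  have hO' (y : α) : π⁻¹ y ∈ O ↔ y ∈ O := by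
    rw [← hO]
    simp
  have : #(O.filter P) = #(O.filter (¬ P ·)) := by
    refine card_nbij' π (⇑π⁻¹) (fun y hy => ?_) (fun y hy => ?_) (fun y _ => by simp)
      (fun y _ => by simp)
    · simp only [coe_filter, Set.mem_ofPred_eq] at hy ⊢
      exact ⟨(hO y).2 hy.1, by rw [hP]; exact not_not_intro hy.2⟩
    · simp only [coe_filter, Set.mem_ofPred_eq] at hy ⊢
      refine ⟨(hO' y).2 hy.1, ?_⟩
      have := hP (π⁻¹ y)
      simp only [Perm.coe_inv, apply_symm_apply] at this
      tauto
  rw [← card_filter_add_card_filter_not P, this]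
  exact ⟨_, rfl⟩

end Orbits

section SameCycle

variable {α β : Type*} {π : Perm α}

lemma sameCycle_iff_of_semiconj [Finite α] [Finite β] {ρ : Perm β} {e : β → α}
    (he : Function.Injective e) (h : ∀ b, π (e b) = e (ρ b)) (a b : β) :
    π.SameCycle (e a) (e b) ↔ ρ.SameCycle a b := by
  have hpow (m : ℕ) (b : β) : (π ^ m) (e b) = e ((ρ ^ m) b) := by
    simp only [coe_pow]
    exact ((Function.Semiconj.iterate_right (fun b => (h b).symm) m) b).symm
  constructor
  · intro hs
    obtain ⟨m, -, hm⟩ := hs.exists_pow_eq'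
    exact ⟨m, by simpa using he ((hpow m a).symm.trans hm)⟩
  · intro hs
    obtain ⟨m, -, hm⟩ := hs.exists_pow_eq'
    exact ⟨m, by simpa [hpow] using congrArg e hm⟩

lemma sameCycle_iff_sameCycle_sq [Finite α] {P : α → Prop} (hP : ∀ x, P (π x) ↔ ¬ P x)
    {x y : α} (hxy : P x ↔ P y) :
    π.SameCycle x y ↔ (π ^ 2).SameCycle x y := by
  have hpow (m : ℕ) : P ((π ^ m) x) ↔ (P x ↔ Even m) := by
    induction m with
    | zero => simp
    | succ m ih => rw [pow_succ', mul_apply, hP, ih, Nat.even_add_one]; tauto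
  refine ⟨fun hs => ?_, SameCycle.of_pow⟩
  obtain ⟨m, -, hm⟩ := hs.exists_pow_eq'
  obtain ⟨t, rfl⟩ : Even m := by
    have := hpow m
    rw [hm] at this
    tauto
  exact ⟨t, by rw [← two_mul, pow_mul] at hm; simpa using hm⟩

end SameCycle

section NumCycles

variable {N n : ℕ}

lemma numCycles_eq_card_orbitFinsets (π : Perm (Fin N)) : numCycles π = #(orbitFinsets π) := by
  rw [card_orbitFinsets, numCycles, cycleType_def, Multiset.card_map]
  rfl

lemma numCycles_le_s17 (π : Perm (Fin N)) : numCycles π ≤ N := by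
  rw [numCycles_eq_card_orbitFinsets]
  exact card_image_le.trans_eq (card_fin N)

lemma numCycles_eq_of_sameCycle_iff (π : Perm (Fin N)) (ρ : Perm (Fin n)) (e : Fin n → Fin N)
    (hcover : ∀ x, ∃ b, π.SameCycle x (e b))
    (he : ∀ a b, π.SameCycle (e a) (e b) ↔ ρ.SameCycle a b) :
    numCycles π = numCycles ρ := by
  rw [numCycles_eq_card_orbitFinsets, numCycles_eq_card_orbitFinsets,
    card_orbitFinsets_eq_of_sameCycle_iff ρ e hcover he]

lemma numCycles_eq_card_cycleType_add (π : Perm (Fin N)) :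
    numCycles π = π.cycleType.card + (N - #π.support) := by
  have : (univ.filter fun x => π x = x) = π.supportᶜ := by
    ext x
    simp
  rw [numCycles, this, card_compl, Fintype.card_fin]

lemma numCycles_extendDomain {p : Fin N → Prop} [DecidablePred p] (g : Perm (Fin n))
    (f : Fin n ≃ Subtype p) :
    numCycles (g.extendDomain f) = (N - n) + numCycles g := by
  have hn : n ≤ N := by
    have := Fintype.card_subtype_le p
    rwa [← Fintype.card_congr f, Fintype.card_fin, Fintype.card_fin] at this
  have hg : #g.support ≤ n := card_le_univ _ |>.trans_eq (card_fin n)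
  rw [numCycles_eq_card_cycleType_add, numCycles_eq_card_cycleType_add, cycleType_extendDomain,
    card_support_extend_domain]
  omega

lemma numCycles_finRotate (hN : 0 < N) : numCycles (finRotate N) = 1 := by
  rw [numCycles_eq_card_cycleType_add]
  obtain rfl | hN : N = 1 ∨ 2 ≤ N := by omega
  · simp [finRotate_one, ← Perm.one_def]
  · rw [cycleType_finRotate_of_le hN, support_finRotate_of_le hN]
    simp

lemma isNC_iff_numCycles (hN : 0 < N) (π : Perm (Fin N)) :
    IsNC π ↔ numCycles π + numCycles (π⁻¹ * finRotate N) = N + 1 := by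
  have := numCycles_le_s17 π
  have := numCycles_le_s17 (π⁻¹ * finRotate N)
  rw [IsNC, plen, plen, plen, numCycles_finRotate hN]
  omega

end NumCycles

section ParityReversing

variable {N : ℕ} {π : Perm (Fin N)}

lemma ParityReversing.odd_apply_iff (h : ParityReversing π) (x : Fin N) :
    Odd ((π x).val + 1) ↔ ¬ Odd (x.val + 1) := by
  have := h x
  rw [SameParity] at this
  tauto

lemma ParityReversing.evenCycles (h : ParityReversing π) : EvenCycles π :=
  even_card_orbitFinset (P := fun x => Odd (x.val + 1)) h.odd_apply_iff

end ParityReversing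

section Doubling

variable {n : ℕ}

lemma val_finRotate_s17 {m : ℕ} (x : Fin m) : (finRotate m x).val = (x.val + 1) % m := by
  rcases m with _ | m
  · exact x.elim0
  · rw [finRotate_apply, Fin.val_add, Fin.val_one', Nat.add_mod_mod]

lemma odd_finRotate_iff (x : Fin (2 * n)) :
    Odd ((finRotate (2 * n) x).val + 1) ↔ ¬ Odd (x.val + 1) := by
  rw [val_finRotate_s17, Nat.odd_iff, Nat.odd_iff]
  obtain hx | hx : x.val + 1 < 2 * n ∨ x.val + 1 = 2 * n := by omega
  · rw [Nat.mod_eq_of_lt hx]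
    omega
  · rw [hx, Nat.mod_self]
    omega

-- `dbl2 k` carries the even label `2(k+1)` and `dbl2Succ k` the next label, which is odd
-- (it wraps around to the label `1` when `k = n - 1`).
noncomputable def dbl2Succ (k : Fin n) : Fin (2 * n) := finRotate (2 * n) (dbl2 k)

lemma not_odd_dbl2 (k : Fin n) : ¬ Odd ((dbl2 k).val + 1) := by
  simp [dbl2, Nat.odd_add_one, parity_simps]

lemma odd_dbl2Succ (k : Fin n) : Odd ((dbl2Succ k).val + 1) :=
  (odd_finRotate_iff _).2 (not_odd_dbl2 k)

lemma dbl2_injective : Function.Injective (dbl2 (n := n)) := by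
  intro a b h
  simpa [dbl2, Fin.ext_iff] using h

lemma dbl2Succ_injective : Function.Injective (dbl2Succ (n := n)) :=
  (finRotate _).injective.comp dbl2_injective

lemma mem_range_dbl2_iff {x : Fin (2 * n)} : x ∈ Set.range dbl2 ↔ ¬ Odd (x.val + 1) := by
  refine ⟨fun ⟨k, hk⟩ => hk ▸ not_odd_dbl2 k, fun hx => ?_⟩
  obtain ⟨t, ht⟩ : Odd x.val := by simpa [Nat.odd_add_one] using hx
  exact ⟨⟨t, by omega⟩, Fin.ext (by simp [dbl2, ht])⟩

lemma mem_range_dbl2Succ_iff {x : Fin (2 * n)} : x ∈ Set.range dbl2Succ ↔ Odd (x.val + 1) := by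
  refine ⟨fun ⟨k, hk⟩ => hk ▸ odd_dbl2Succ k, fun hx => ?_⟩
  have hy : ¬ Odd (((finRotate (2 * n)).symm x).val + 1) := by
    rwa [← odd_finRotate_iff, apply_symm_apply]
  obtain ⟨k, hk⟩ := mem_range_dbl2_iff.2 hy
  exact ⟨k, by rw [dbl2Succ, hk, apply_symm_apply]⟩

lemma finRotate_dbl2Succ (k : Fin n) : finRotate (2 * n) (dbl2Succ k) = dbl2 (finRotate n k) := by
  ext
  simp only [dbl2Succ, val_finRotate_s17, dbl2]
  obtain hk | hk : k.val + 1 < n ∨ k.val + 1 = n := by omega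
  · rw [Nat.mod_eq_of_lt hk, Nat.mod_eq_of_lt (show 2 * k.val + 1 + 1 < 2 * n by omega),
      Nat.mod_eq_of_lt (show 2 * k.val + 1 + 1 + 1 < 2 * n by omega)]
    ring
  · rw [hk, Nat.mod_self, show 2 * k.val + 1 + 1 = 2 * n by omega, Nat.mod_self,
      Nat.mod_eq_of_lt (by omega)]

end Doubling

section IsDouble

variable {n : ℕ} {σ : Perm (Fin n)} {π : Perm (Fin (2 * n))}

lemma IsDouble.apply_dbl2 (hd : IsDouble σ π) (k : Fin n) : π (dbl2 k) = dbl2Succ k :=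
  hd.1 _ (Nat.not_odd_iff_even.1 (not_odd_dbl2 k))

lemma IsDouble.apply_dbl2Succ (hd : IsDouble σ π) (k : Fin n) : π (dbl2Succ k) = dbl2 (σ k) := by
  rw [← hd.2 k, pow_two, mul_apply, hd.apply_dbl2]

lemma IsDouble.parityReversing (hd : IsDouble σ π) : ParityReversing π := by
  intro x
  by_cases hx : Odd (x.val + 1)
  · obtain ⟨k, rfl⟩ := mem_range_dbl2Succ_iff.2 hx
    simp [SameParity, hd.apply_dbl2Succ, odd_dbl2Succ, not_odd_dbl2]
  · obtain ⟨k, rfl⟩ := mem_range_dbl2_iff.2 hx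
    simp [SameParity, hd.apply_dbl2, odd_dbl2Succ, not_odd_dbl2]

lemma finRotate_mul_inv_fixes_odd_iff :
    (∀ j : Fin (2 * n), Odd (j.val + 1) → (finRotate (2 * n) * π⁻¹) j = j) ↔
      ∀ j : Fin (2 * n), Even (j.val + 1) → π j = finRotate (2 * n) j := by
  have key (j : Fin (2 * n)) : (finRotate (2 * n) * π⁻¹) (finRotate (2 * n) j) =
      finRotate (2 * n) j ↔ π j = finRotate (2 * n) j := by
    rw [mul_apply, EmbeddingLike.apply_eq_iff_eq, inv_eq_iff_eq, eq_comm]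
  refine ⟨fun h j hj => (key j).1 (h _ ((odd_finRotate_iff j).2 (Nat.not_odd_iff_even.2 hj))),
    fun h j hj => ?_⟩
  have hj' : Even (((finRotate (2 * n)).symm j).val + 1) := by
    rwa [← Nat.not_odd_iff_even, ← odd_finRotate_iff, apply_symm_apply]
  have := (key _).2 (h _ hj')
  rwa [apply_symm_apply] at this

lemma parityReversing_of_eq_finRotate
    (h : ∀ j : Fin (2 * n), Even (j.val + 1) → π j = finRotate (2 * n) j) :
    ParityReversing π := by
  intro x
  by_cases hx : Odd (x.val + 1)
  · have hπx : ¬ Odd ((π x).val + 1) := by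
      intro hπx
      set y := (finRotate (2 * n)).symm (π x)
      have hy : Even (y.val + 1) := by
        rwa [← Nat.not_odd_iff_even, ← odd_finRotate_iff, apply_symm_apply]
      have hyx : y = x := π.injective (by rw [h y hy, apply_symm_apply])
      exact Nat.not_odd_iff_even.2 hy (hyx ▸ hx)
    simp [SameParity, hx, hπx]
  · rw [SameParity, h x (Nat.not_odd_iff_even.1 hx), odd_finRotate_iff]
    tauto

lemma exists_isDouble (h : ∀ j : Fin (2 * n), Even (j.val + 1) → π j = finRotate (2 * n) j) :
    ∃ σ : Perm (Fin n), IsDouble σ π := by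
  have hrev := parityReversing_of_eq_finRotate h
  have hsq (x : Fin (2 * n)) : (π ^ 2) x ∈ Set.range dbl2 ↔ x ∈ Set.range dbl2 := by
    rw [mem_range_dbl2_iff, mem_range_dbl2_iff, pow_two, mul_apply, hrev.odd_apply_iff,
      hrev.odd_apply_iff, not_not]
  -- `σ` is `π ^ 2` restricted to the even labels, read through `dbl2`.
  refine ⟨(Equiv.ofInjective dbl2 dbl2_injective).symm.permCongr ((π ^ 2).subtypePerm hsq), h,
    fun k => ?_⟩
  rw [permCongr_apply, apply_ofInjective_symm dbl2_injective]
  rfl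

lemma IsDouble.numCycles_eq (hd : IsDouble σ π) : numCycles π = numCycles σ := by
  have hP : ∀ x, Odd ((π x).val + 1) ↔ ¬ Odd (x.val + 1) := hd.parityReversing.odd_apply_iff
  refine numCycles_eq_of_sameCycle_iff π σ dbl2 (fun x => ?_) (fun a b => ?_)
  · by_cases hx : Odd (x.val + 1)
    · obtain ⟨k, rfl⟩ := mem_range_dbl2Succ_iff.2 hx
      exact ⟨k, by rw [← hd.apply_dbl2, sameCycle_apply_left]⟩
    · obtain ⟨k, rfl⟩ := mem_range_dbl2_iff.2 hx
      exact ⟨k, .refl _ _⟩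
  · rw [sameCycle_iff_sameCycle_sq (P := fun x => Odd (x.val + 1)) hP
      (iff_of_false (not_odd_dbl2 a) (not_odd_dbl2 b))]
    exact sameCycle_iff_of_semiconj dbl2_injective hd.2 a b

lemma IsDouble.inv_mul_finRotate_eq_extendDomain (hd : IsDouble σ π) :
    π⁻¹ * finRotate (2 * n) =
      (σ⁻¹ * finRotate n).extendDomain (Equiv.ofInjective dbl2Succ dbl2Succ_injective) := by
  ext x : 1
  by_cases hx : x ∈ Set.range dbl2Succ
  · obtain ⟨k, rfl⟩ := hx
    rw [show dbl2Succ k = (Equiv.ofInjective dbl2Succ dbl2Succ_injective k : Fin (2 * n)) from rfl,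
      extendDomain_apply_image, ofInjective_apply, ofInjective_apply, mul_apply, mul_apply,
      finRotate_dbl2Succ, inv_eq_iff_eq, hd.apply_dbl2Succ]
    simp
  · obtain ⟨k, rfl⟩ := mem_range_dbl2_iff.2 (mem_range_dbl2Succ_iff.not.1 hx)
    rw [extendDomain_apply_not_subtype _ _ hx, mul_apply, inv_eq_iff_eq, hd.apply_dbl2]
    rfl

lemma IsDouble.numCycles_inv_mul_finRotate (hd : IsDouble σ π) :
    numCycles (π⁻¹ * finRotate (2 * n)) = n + numCycles (σ⁻¹ * finRotate n) := by
  rw [hd.inv_mul_finRotate_eq_extendDomain, numCycles_extendDomain]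
  omega

lemma IsDouble.isNC_iff (hd : IsDouble σ π) : IsNC π ↔ IsNC σ := by
  rcases n.eq_zero_or_pos with rfl | hn
  · simp [IsNC, plen]
  rw [isNC_iff_numCycles (by omega), isNC_iff_numCycles hn, hd.numCycles_eq,
    hd.numCycles_inv_mul_finRotate]
  omega

end IsDouble

theorem stmt17 (n : ℕ) :
    (∀ π : Equiv.Perm (Fin (2*n)), IsNC π → EvenCycles π →
      (∀ j : Fin (2*n), Odd (j.val + 1) → (finRotate (2*n) * π⁻¹) j = j) →
      ∃ σ : Equiv.Perm (Fin n), IsNC σ ∧ IsDouble σ π) ∧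
    (∀ σ : Equiv.Perm (Fin n), IsNC σ → ∀ π : Equiv.Perm (Fin (2*n)), IsDouble σ π →
      EvenCycles π ∧
        (∀ j : Fin (2*n), Odd (j.val + 1) → (finRotate (2*n) * π⁻¹) j = j)) := by
  refine ⟨fun π hπ _ hfix => ?_, fun σ _ π hd => ?_⟩
  · obtain ⟨σ, hd⟩ := exists_isDouble (finRotate_mul_inv_fixes_odd_iff.1 hfix)
    exact ⟨σ, hd.isNC_iff.1 hπ, hd⟩
  · exact ⟨hd.parityReversing.evenCycles, finRotate_mul_inv_fixes_odd_iff.2 hd.1⟩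
end
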